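/- arXiv:2006.06830 — 4 statements merged into one kernel-verified Lean document; each statement's English description precedes it below -/
import Mathlib

section
/- Let the graph on n nodes be a disjoint union of fully connected components encoded by c : Fin n → Fin k, with Ā = D̃^{-1/2} Ã D̃^{-1/2} the symmetrically normalized adjacency matrix (Ã = A + I, D̃ its diagonal degree matrix). Let X ∈ ℝ^{n×F} be any node feature matrix and W ∈ ℝ^{F×F'} any weight matrix. Then for every node i, the i-th row of the pre-activation matrix Ā X W equals (1/|S|) · (Σ_{v ∈ S} X_{v:}) W, where S = {v : c(v) = c(i)} is the component containing i. -/
open Matrix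

/-!
On a disjoint union of cliques, `Ã` is the indicator of "same component", so the degree of `i`
in `Ã` is the size `|S|` of its component and `D̃^{-1/2} Ã D̃^{-1/2}` has entry `1/|S|` between
nodes of the same component and `0` otherwise. Multiplying by `X` therefore averages the rows
of `X` over the component, and `W` acts on that average row.
-/

section

variable {ι κ : Type*} [DecidableEq κ]

/-- The matrix `Ã` of the disjoint union of cliques labelled by `c`. -/
def sameLabel (c : ι → κ) : Matrix ι ι ℝ :=
  of fun i j => if c i = c j then 1 else 0

lemma add_one_eq_sameLabel [DecidableEq ι] {c : ι → κ} {A : Matrix ι ι ℝ}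
    (hA : ∀ i j, A i j = if i ≠ j ∧ c i = c j then 1 else 0) :
    A + 1 = sameLabel c := by
  ext i j
  by_cases hij : i = j
  · subst hij
    simp [sameLabel, hA]
  · simp [sameLabel, hA, hij]

variable [Fintype ι]

def labelClass (c : ι → κ) (i : ι) : Finset ι :=
  Finset.univ.filter fun v => c v = c i

lemma labelClass_eq_of_label_eq {c : ι → κ} {i j : ι} (h : c i = c j) :
    labelClass c i = labelClass c j := by
  simp [labelClass, h]

/-- The matrix `Ā` of the disjoint union of cliques labelled by `c`. -/
noncomputable def labelAverage (c : ι → κ) : Matrix ι ι ℝ :=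
  of fun i j => if c i = c j then ((labelClass c i).card : ℝ)⁻¹ else 0

lemma sum_sameLabel_apply (c : ι → κ) (i : ι) :
    ∑ j, sameLabel c i j = (labelClass c i).card := by
  simp only [sameLabel, of_apply, labelClass, Finset.sum_boole, eq_comm]

lemma diagonal_mul_sameLabel_mul_diagonal (c : ι → κ) [DecidableEq ι] :
    let D := diagonal fun i => (√(∑ j, sameLabel c i j))⁻¹
    D * sameLabel c * D = labelAverage c := by
  ext i j
  simp only [mul_diagonal, diagonal_mul, sum_sameLabel_apply]
  simp only [sameLabel, labelAverage, of_apply]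
  split_ifs with h
  · rw [labelClass_eq_of_label_eq h.symm, mul_one, ← mul_inv,
      Real.mul_self_sqrt (Nat.cast_nonneg _)]
  · simp

lemma labelAverage_mul_apply {α : Type*} (c : ι → κ) (X : Matrix ι α ℝ) (i : ι) :
    (labelAverage c * X) i = ((labelClass c i).card : ℝ)⁻¹ • ∑ v ∈ labelClass c i, X v := by
  ext a
  simp only [mul_apply, labelAverage, of_apply, ite_mul, zero_mul, Finset.sum_ite,
    Finset.sum_const_zero, add_zero, ← Finset.mul_sum, Pi.smul_apply, smul_eq_mul]
  rw [Finset.sum_apply a (labelClass c i) X]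
  congr 2
  exact Finset.filter_congr fun v _ => eq_comm

end

/-- For a disjoint union of fully connected components encoded by `c`, and
`Ā = D̃^{-1/2} Ã D̃^{-1/2}`, the `i`-th row of the pre-activation `Ā X W` equals
`(1/|S|) • (∑ v ∈ S, X v) ᵥ* W`, where `S` is the component of `i`. -/
theorem preactivation_row_eq_mean (n k F F' : ℕ) (c : Fin n → Fin k)
    (A Atil Dinvsqrt Abar : Matrix (Fin n) (Fin n) ℝ)
    (X : Matrix (Fin n) (Fin F) ℝ) (W : Matrix (Fin F) (Fin F') ℝ)
    (hA : ∀ i j, A i j = if i ≠ j ∧ c i = c j then 1 else 0)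
    (hAtil : Atil = A + 1)
    (hD : Dinvsqrt = Matrix.diagonal (fun i => (Real.sqrt (∑ j, Atil i j))⁻¹))
    (hAbar : Abar = Dinvsqrt * Atil * Dinvsqrt) :
    ∀ i : Fin n,
      (Abar * X * W) i =
        ((((Finset.univ.filter (fun v => c v = c i)).card : ℝ))⁻¹ •
          ∑ v ∈ Finset.univ.filter (fun v => c v = c i), X v) ᵥ* W := by
  intro i
  rw [add_one_eq_sameLabel hA] at hAtil
  subst hAbar hD hAtil
  rw [diagonal_mul_sameLabel_mul_diagonal c]
  exact congrArg (· ᵥ* W) (labelAverage_mul_apply c X i)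
end

section
/- (Theorem 1, part 1, GCN form.) Let the graph on n nodes be a disjoint union of k fully connected components encoded by c : Fin n → Fin k, with adjacency matrix A_{ij} = 1 if i ≠ j and c(i) = c(j), else 0. Let Ã = A + I, D̃ the diagonal degree matrix of Ã, and Ā = D̃^{-1/2} Ã D̃^{-1/2}. Let X ∈ ℝ^{n×F} be any feature matrix, W ∈ ℝ^{F×F'} any weight matrix, σ : ℝ → ℝ any function applied entrywise, and H = σ(Ā X W). Then for any two nodes i, j contained in the same component (c(i) = c(j)), the corresponding rows of H are equal: H_{i:} = H_{j:}. -/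
/-- Theorem 1, part 1 (GCN form): for a disjoint union of fully connected
components encoded by `c`, with `H = σ(Ā X W)` applied entrywise, any two nodes
in the same component get equal rows of `H`. -/
theorem gcn_same_component_same_embedding (n k F F' : ℕ) (c : Fin n → Fin k)
    (A Atil Dinvsqrt Abar : Matrix (Fin n) (Fin n) ℝ)
    (X : Matrix (Fin n) (Fin F) ℝ) (W : Matrix (Fin F) (Fin F') ℝ)
    (σ : ℝ → ℝ) (H : Matrix (Fin n) (Fin F') ℝ)
    (hA : ∀ i j, A i j = if i ≠ j ∧ c i = c j then 1 else 0)
    (hAtil : Atil = A + 1)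
    (hD : Dinvsqrt = Matrix.diagonal (fun i => (Real.sqrt (∑ j, Atil i j))⁻¹))
    (hAbar : Abar = Dinvsqrt * Atil * Dinvsqrt)
    (hH : H = (Abar * X * W).map σ) :
    ∀ i j : Fin n, c i = c j → H i = H j := by
  have hAt : ∀ i l, Atil i l = if c i = c l then 1 else 0 := by
    intro i l
    subst hAtil
    simp only [Matrix.add_apply, Matrix.one_apply, hA]
    by_cases h : i = l
    · subst h; simp
    · simp [h]
  have hrow : ∀ i j : Fin n, c i = c j → Atil i = Atil j := by
    intro i j hc
    funext l
    rw [hAt, hAt, hc]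
  intro i j hc
  have hd : (Real.sqrt (∑ l, Atil i l))⁻¹ = (Real.sqrt (∑ l, Atil j l))⁻¹ := by
    rw [hrow i j hc]
  have hAbarrow : Abar i = Abar j := by
    funext l
    subst hAbar hD
    simp only [Matrix.mul_diagonal, Matrix.diagonal_mul]
    rw [hrow i j hc]
  have hABXW : (Abar * X * W) i = (Abar * X * W) j := by
    funext l
    simp only [Matrix.mul_apply]
    congr 1
    funext m
    congr 2
    funext p
    rw [hAbarrow]
  subst hH
  funext l
  simp only [Matrix.map_apply]
  rw [hABXW]
end

section
/- Let the graph on n nodes be a disjoint union of k fully connected components encoded by c : Fin n → Fin k, with Ā = D̃^{-1/2} Ã D̃^{-1/2} (Ã = A + I, D̃ its diagonal degree matrix), X ∈ ℝ^{n×F}, W ∈ ℝ^{F×F'}, σ : ℝ → ℝ applied entrywise, and H = σ(Ā X W). Then the set of distinct rows of H, namely {H_{i:} : i ∈ Fin n}, has cardinality at most k. -/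
/-- For a disjoint union of `k` fully connected components encoded by `c`, the
GCN layer output `H = σ(Ā X W)` has at most `k` distinct rows. -/
theorem gcn_at_most_k_distinct_rows (n k F F' : ℕ) (c : Fin n → Fin k)
    (A Atil Dinvsqrt Abar : Matrix (Fin n) (Fin n) ℝ)
    (X : Matrix (Fin n) (Fin F) ℝ) (W : Matrix (Fin F) (Fin F') ℝ)
    (σ : ℝ → ℝ) (H : Matrix (Fin n) (Fin F') ℝ)
    (hA : ∀ i j, A i j = if i ≠ j ∧ c i = c j then 1 else 0)
    (hAtil : Atil = A + 1)
    (hD : Dinvsqrt = Matrix.diagonal (fun i => (Real.sqrt (∑ j, Atil i j))⁻¹))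
    (hAbar : Abar = Dinvsqrt * Atil * Dinvsqrt)
    (hH : H = (Abar * X * W).map σ) :
    (Set.range (fun i : Fin n => H i)).ncard ≤ k := by
  classical
  have hAtil' : ∀ i j, Atil i j = if c i = c j then 1 else 0 := by
    intro i j
    by_cases h : i = j
    · subst h; simp [hAtil, Matrix.add_apply, Matrix.one_apply, hA]
    · simp [hAtil, Matrix.add_apply, Matrix.one_apply, hA, h]
  have hAb : ∀ i i', c i = c i' → ∀ j, Abar i j = Abar i' j := by
    intro i i' hc j
    subst hAbar
    subst hD
    simp only [Matrix.mul_diagonal, Matrix.diagonal_mul]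
    have h1 : (∑ m, Atil i m) = ∑ m, Atil i' m := by
      simp [hAtil', hc]
    have h2 : Atil i j = Atil i' j := by simp [hAtil', hc]
    rw [h1, h2]
  have hrow : ∀ i i', c i = c i' → H i = H i' := by
    intro i i' hc
    funext j
    simp only [hH, Matrix.map_apply, Matrix.mul_apply]
    congr 1
    refine Finset.sum_congr rfl fun l _ => ?_
    congr 1
    refine Finset.sum_congr rfl fun m _ => ?_
    rw [hAb i i' hc]
  have hsub : Set.range (fun i : Fin n => H i) ⊆
      Set.range (fun j : Fin k => if h : ∃ i, c i = j then H h.choose else 0) := by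
    rintro _ ⟨i, rfl⟩
    refine ⟨c i, ?_⟩
    have hex : ∃ i', c i' = c i := ⟨i, rfl⟩
    simp only [dif_pos hex]
    exact hrow _ _ hex.choose_spec
  calc (Set.range (fun i : Fin n => H i)).ncard
      ≤ (Set.range (fun j : Fin k => if h : ∃ i, c i = j then H h.choose else 0)).ncard :=
        Set.ncard_le_ncard hsub (Set.finite_range _)
    _ ≤ Nat.card (Fin k) := by
        rw [← Nat.card_coe_set_eq]
        exact Finite.card_range_le _
    _ = k := by simp
end

section
/- (Theorem 1, part 1, row-normalized/GraphSAGE form.) Let the graph on n nodes be a disjoint union of fully connected components encoded by c : Fin n → Fin k, with adjacency matrix A_{ij} = 1 if i ≠ j and c(i) = c(j), else 0, Ã = A + I, and D̃ the diagonal degree matrix of Ã. Let the row-normalized adjacency be Ā = D̃^{-1} Ã. Then Ā_{ij} = 1/|{v : c(v) = c(i)}| when c(i) = c(j) and Ā_{ij} = 0 otherwise; consequently, for any feature matrix X ∈ ℝ^{n×F}, weight matrix W ∈ ℝ^{F×F'}, and entrywise σ : ℝ → ℝ, the matrix H = σ(Ā X W) satisfies H_{i:} = H_{j:} whenever c(i)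 = c(j). -/
/-- Theorem 1, part 1 (row-normalized / GraphSAGE form): with `Ā = D̃⁻¹ Ã`,
`Ā i j = 1/|{v : c v = c i}|` when `c i = c j` and `0` otherwise; consequently
`H = σ(Ā X W)` has equal rows for nodes in the same component. -/
theorem sage_same_component_same_embedding (n k F F' : ℕ) (c : Fin n → Fin k)
    (A Atil Dinv Abar : Matrix (Fin n) (Fin n) ℝ)
    (X : Matrix (Fin n) (Fin F) ℝ) (W : Matrix (Fin F) (Fin F') ℝ)
    (σ : ℝ → ℝ) (H : Matrix (Fin n) (Fin F') ℝ)
    (hA : ∀ i j, A i j = if i ≠ j ∧ c i = c j then 1 else 0)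
    (hAtil : Atil = A + 1)
    (hD : Dinv = Matrix.diagonal (fun i => (∑ j, Atil i j)⁻¹))
    (hAbar : Abar = Dinv * Atil)
    (hH : H = (Abar * X * W).map σ) :
    (∀ i j : Fin n,
      (c i = c j →
        Abar i j = 1 / ((Finset.univ.filter (fun v => c v = c i)).card : ℝ)) ∧
      (c i ≠ c j → Abar i j = 0)) ∧
    (∀ i j : Fin n, c i = c j → H i = H j) := by
  have hAt : ∀ i j, Atil i j = if c i = c j then 1 else 0 := by
    intro i j
    have h1 : Atil i j = A i j + (if i = j then (1:ℝ) else 0) := by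
      simp [hAtil, Matrix.add_apply, Matrix.one_apply]
    rw [h1, hA]
    by_cases h : i = j
    · subst h; simp
    · simp [h]
  have hsum : ∀ i, (∑ j, Atil i j)
      = ((Finset.univ.filter (fun v => c v = c i)).card : ℝ) := by
    intro i
    calc ∑ j, Atil i j = ∑ j, if c j = c i then (1:ℝ) else 0 := by
          simp [hAt, eq_comm]
      _ = _ := by rw [Finset.sum_boole]
  have hBar : ∀ i j, Abar i j
      = ((Finset.univ.filter (fun v => c v = c i)).card : ℝ)⁻¹
        * (if c i = c j then 1 else 0) := by
    intro i j
    rw [hAbar, hD, Matrix.diagonal_mul, hsum, hAt]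
  refine ⟨fun i j => ⟨fun hc => by rw [hBar, if_pos hc, mul_one, one_div],
      fun hc => by rw [hBar, if_neg hc, mul_zero]⟩, fun i j hc => ?_⟩
  have hfilter : (Finset.univ.filter (fun v => c v = c i))
      = (Finset.univ.filter (fun v => c v = c j)) := by
    simp [hc]
  have hrow : Abar i = Abar j := by
    funext v
    rw [hBar, hBar, hfilter, hc]
  subst hH
  funext f'
  simp only [Matrix.map_apply, Matrix.mul_apply]
  congr 1
  refine Finset.sum_congr rfl fun g _ => ?_
  congr 1
  refine Finset.sum_congr rfl fun v _ => ?_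
  rw [show Abar i v = Abar j v from congrFun hrow v]
end
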